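/- Let G be the group with presentation ⟨s₁,s₂,s₃,h | [sₖ,h] for 1≤k≤3, s₁²h, s₂⁴h, s₃⁴h, s₁s₂s₃h⟩. The map fixing s₁ and h and sending s₂ ↦ s₂s₃s₂⁻¹, s₃ ↦ s₂ extends to an automorphism θ of G, and φ₁ = φ₂ ∘ θ, where φ₁, φ₂ : G → ℤ/2 are the epimorphisms with (φ₁(s₁),φ₁(s₂),φ₁(s₃),φ₁(h))=(1,1,0,0) and (φ₂(s₁),φ₂(s₂),φ₂(s₃),φ₂(h))=(1,0,1,0). -/
import Mathlib


open FreeGroup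

/-- Relators of π₁(M₄) = ⟨s₁,s₂,s₃,h | [sₖ,h] (1≤k≤3), s₁²h, s₂⁴h, s₃⁴h, s₁s₂s₃h⟩,
generators s₁=0, s₂=1, s₃=2, h=3. -/
def relsM4 : Set (FreeGroup (Fin 4)) :=
  { of 0 * of 3 * (of 0)⁻¹ * (of 3)⁻¹,
    of 1 * of 3 * (of 1)⁻¹ * (of 3)⁻¹,
    of 2 * of 3 * (of 2)⁻¹ * (of 3)⁻¹,
    of 0 ^ 2 * of 3, of 1 ^ 4 * of 3, of 2 ^ 4 * of 3,
    of 0 * of 1 * of 2 * of 3 }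

/-- Reduction mod 2, multiplicatively. -/
def mod2 : Multiplicative ℤ →* Multiplicative (ZMod 2) :=
  AddMonoidHom.toMultiplicative (Int.castAddHom (ZMod 2))

namespace StmtAux

abbrev G4 := PresentedGroup relsM4

lemma relOne {r : FreeGroup (Fin 4)} (h : r ∈ relsM4) :
    PresentedGroup.mk relsM4 r = 1 :=
  (QuotientGroup.eq_one_iff r).mpr (Subgroup.subset_normalClosure h)

lemma mk_of (i : Fin 4) : PresentedGroup.mk relsM4 (of i) = PresentedGroup.of i := rfl

lemma commAux {a d : G4} (h : a * d * a⁻¹ * d⁻¹ = 1) : Commute a d := by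
  have h' : (a * d) * (d * a)⁻¹ = 1 := by
    simpa [mul_inv_rev, mul_assoc] using h
  exact mul_inv_eq_one.mp h'

lemma comm0 : Commute (PresentedGroup.of 0 : G4) (PresentedGroup.of 3) := by
  apply commAux
  have := relOne (show of 0 * of 3 * (of 0)⁻¹ * (of 3)⁻¹ ∈ relsM4 by simp [relsM4])
  simpa [map_mul, map_inv, mk_of] using this

lemma comm1 : Commute (PresentedGroup.of 1 : G4) (PresentedGroup.of 3) := by
  apply commAux
  have := relOne (show of 1 * of 3 * (of 1)⁻¹ * (of 3)⁻¹ ∈ relsM4 by simp [relsM4])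
  simpa [map_mul, map_inv, mk_of] using this

lemma comm2 : Commute (PresentedGroup.of 2 : G4) (PresentedGroup.of 3) := by
  apply commAux
  have := relOne (show of 2 * of 3 * (of 2)⁻¹ * (of 3)⁻¹ ∈ relsM4 by simp [relsM4])
  simpa [map_mul, map_inv, mk_of] using this

lemma rel4 : (PresentedGroup.of 0 : G4) ^ 2 * PresentedGroup.of 3 = 1 := by
  have := relOne (show of 0 ^ 2 * of 3 ∈ relsM4 by simp [relsM4])
  simpa [map_mul, map_pow, mk_of] using this

lemma rel5 : (PresentedGroup.of 1 : G4) ^ 4 * PresentedGroup.of 3 = 1 := by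
  have := relOne (show of 1 ^ 4 * of 3 ∈ relsM4 by simp [relsM4])
  simpa [map_mul, map_pow, mk_of] using this

lemma rel6 : (PresentedGroup.of 2 : G4) ^ 4 * PresentedGroup.of 3 = 1 := by
  have := relOne (show of 2 ^ 4 * of 3 ∈ relsM4 by simp [relsM4])
  simpa [map_mul, map_pow, mk_of] using this

lemma rel7 : (PresentedGroup.of 0 : G4) * PresentedGroup.of 1 * PresentedGroup.of 2 *
    PresentedGroup.of 3 = 1 := by
  have := relOne (show of 0 * of 1 * of 2 * of 3 ∈ relsM4 by simp [relsM4])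
  simpa [map_mul, mk_of] using this

lemma commRel {G : Type*} [Group G] {x d : G} (h : Commute x d) :
    x * d * x⁻¹ * d⁻¹ = 1 := by
  rw [h.eq]; group

lemma conjRel {G : Type*} [Group G] {x y d : G} (hyd : Commute y d) (h : x ^ 4 * d = 1) :
    (y * x * y⁻¹) ^ 4 * d = 1 := by
  rw [conj_pow, mul_assoc (y * x ^ 4), hyd.inv_left.eq, ← mul_assoc,
    mul_assoc y, h, mul_one, mul_inv_cancel]

def θf : Fin 4 → G4 :=
  ![PresentedGroup.of 0,
    PresentedGroup.of 1 * PresentedGroup.of 2 * (PresentedGroup.of 1)⁻¹,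
    PresentedGroup.of 1, PresentedGroup.of 3]

def φf : Fin 4 → G4 :=
  ![PresentedGroup.of 0, PresentedGroup.of 2,
    (PresentedGroup.of 2)⁻¹ * PresentedGroup.of 1 * PresentedGroup.of 2,
    PresentedGroup.of 3]

lemma θ7aux : (PresentedGroup.of 0 : G4) * (PresentedGroup.of 1 * PresentedGroup.of 2 *
    (PresentedGroup.of 1)⁻¹) * PresentedGroup.of 1 * PresentedGroup.of 3 = 1 := by
  have h : (PresentedGroup.of 0 : G4) * (PresentedGroup.of 1 * PresentedGroup.of 2 *
      (PresentedGroup.of 1)⁻¹) * PresentedGroup.of 1 * PresentedGroup.of 3 =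
      PresentedGroup.of 0 * PresentedGroup.of 1 * PresentedGroup.of 2 *
      PresentedGroup.of 3 := by group
  rw [h]; exact rel7

lemma φ7aux : (PresentedGroup.of 0 : G4) * PresentedGroup.of 2 * ((PresentedGroup.of 2)⁻¹ *
    PresentedGroup.of 1 * PresentedGroup.of 2) * PresentedGroup.of 3 = 1 := by
  have h : (PresentedGroup.of 0 : G4) * PresentedGroup.of 2 * ((PresentedGroup.of 2)⁻¹ *
      PresentedGroup.of 1 * PresentedGroup.of 2) * PresentedGroup.of 3 =
      PresentedGroup.of 0 * PresentedGroup.of 1 * PresentedGroup.of 2 *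
      PresentedGroup.of 3 := by group
  rw [h]; exact rel7

lemma θrels : ∀ r ∈ relsM4, FreeGroup.lift θf r = 1 := by
  rintro r (rfl | rfl | rfl | rfl | rfl | rfl | rfl) <;>
    simp only [map_mul, map_inv, map_pow, FreeGroup.lift_apply_of, θf,
      Matrix.cons_val_zero, Matrix.cons_val_one, Matrix.head_cons,
      Matrix.cons_val_two, Matrix.tail_cons, Matrix.cons_val_three]
  · exact commRel comm0
  · exact commRel ((comm1.mul_left comm2).mul_left comm1.inv_left)
  · exact commRel comm1
  · exact rel4
  · exact conjRel comm1 rel6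
  · exact rel5
  · exact θ7aux

lemma φrels : ∀ r ∈ relsM4, FreeGroup.lift φf r = 1 := by
  rintro r (rfl | rfl | rfl | rfl | rfl | rfl | rfl) <;>
    simp only [map_mul, map_inv, map_pow, FreeGroup.lift_apply_of, φf,
      Matrix.cons_val_zero, Matrix.cons_val_one, Matrix.head_cons,
      Matrix.cons_val_two, Matrix.tail_cons, Matrix.cons_val_three]
  · exact commRel comm0
  · exact commRel comm2
  · exact commRel ((comm2.inv_left.mul_left comm1).mul_left comm2)
  · exact rel4
  · exact rel6
  · have h := conjRel (x := PresentedGroup.of 1) comm2.inv_left rel5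
    simpa using h
  · exact φ7aux

noncomputable def θhom : G4 →* G4 := PresentedGroup.toGroup θrels
noncomputable def φhom : G4 →* G4 := PresentedGroup.toGroup φrels

lemma θhom_of (i : Fin 4) : θhom (PresentedGroup.of i) = θf i :=
  PresentedGroup.toGroup.of θrels

lemma φhom_of (i : Fin 4) : φhom (PresentedGroup.of i) = φf i :=
  PresentedGroup.toGroup.of φrels

lemma left_inv : φhom.comp θhom = MonoidHom.id G4 := by
  ext i
  fin_cases i <;>
    simp [θhom_of, φhom_of, θf, φf, map_mul, map_inv] <;> group

lemma right_inv : θhom.comp φhom = MonoidHom.id G4 := by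
  ext i
  fin_cases i <;>
    simp [θhom_of, φhom_of, θf, φf, map_mul, map_inv] <;> group

noncomputable def θ : G4 ≃* G4 := MonoidHom.toMulEquiv θhom φhom left_inv right_inv

lemma θ_of (i : Fin 4) : θ (PresentedGroup.of i) = θf i := θhom_of i

end StmtAux

open StmtAux

/-- The map fixing s₁, h and sending s₂ ↦ s₂s₃s₂⁻¹, s₃ ↦ s₂ extends to an
automorphism θ of π₁(M₄), and φ₁ = φ₂ ∘ θ for the epimorphisms with values
(1,1,0,0) and (1,0,1,0) on (s₁,s₂,s₃,h). -/
theorem stmt7 :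
    ∃ θ : PresentedGroup relsM4 ≃* PresentedGroup relsM4,
      θ (PresentedGroup.of 0) = PresentedGroup.of 0 ∧
      θ (PresentedGroup.of 1) =
        PresentedGroup.of 1 * PresentedGroup.of 2 * (PresentedGroup.of 1)⁻¹ ∧
      θ (PresentedGroup.of 2) = PresentedGroup.of 1 ∧
      θ (PresentedGroup.of 3) = PresentedGroup.of 3 ∧
      ∀ φ₁ φ₂ : PresentedGroup relsM4 →* Multiplicative (ZMod 2),
        φ₁ (PresentedGroup.of 0) = Multiplicative.ofAdd (1 : ZMod 2) →
        φ₁ (PresentedGroup.of 1) = Multiplicative.ofAdd (1 : ZMod 2) →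
        φ₁ (PresentedGroup.of 2) = Multiplicative.ofAdd (0 : ZMod 2) →
        φ₁ (PresentedGroup.of 3) = Multiplicative.ofAdd (0 : ZMod 2) →
        φ₂ (PresentedGroup.of 0) = Multiplicative.ofAdd (1 : ZMod 2) →
        φ₂ (PresentedGroup.of 1) = Multiplicative.ofAdd (0 : ZMod 2) →
        φ₂ (PresentedGroup.of 2) = Multiplicative.ofAdd (1 : ZMod 2) →
        φ₂ (PresentedGroup.of 3) = Multiplicative.ofAdd (0 : ZMod 2) →
        φ₁ = φ₂.comp θ.toMonoidHom := by
  refine ⟨StmtAux.θ, θ_of 0, θ_of 1, θ_of 2, θ_of 3, ?_⟩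
  intro φ₁ φ₂ h10 h11 h12 h13 h20 h21 h22 h23
  ext i
  fin_cases i <;>
    simp [MonoidHom.comp_apply, θ_of, θf, _root_.map_mul, _root_.map_inv,
      h10, h11, h12, h13, h20, h21, h22, h23, ← ofAdd_add, ← ofAdd_neg]
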